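/- Let K ⊆ ℝⁿ be a locally anti-blocking body with 0 in its interior. Then the polar body K° is locally anti-blocking, and for each sign vector σ, K° ∩ σℝ₊ⁿ = σ·A(σ(K ∩ σℝ₊ⁿ)), where A denotes the anti-blocking dual. -/

import Mathlib

/-!
For `y` in the orthant `σℝ₊ⁿ`, the polar condition `⟪x, y⟫ ≤ 1` only has to be tested on
`K ∩ σℝ₊ⁿ`: zeroing the coordinates of `x ∈ K` whose sign disagrees with `σ` moves every
coordinate towards `0`, so stays in the locally anti-blocking `K`, lands in `σℝ₊ⁿ`, and can only
increase `⟪x, y⟫`. Reflecting by `σ` turns `K° ∩ σℝ₊ⁿ` into the anti-blocking dual of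
`σ(K ∩ σℝ₊ⁿ)`, which is convex and down-closed; it is compact because `0 ∈ int K` makes `K°`
bounded.
-/

open Set MeasureTheory Pointwise
open scoped RealInnerProductSpace

/-- A convex body `K ⊆ ℝ₊ⁿ` (compact, convex, containing `0`) is anti-blocking if
for all `y ∈ K` and `x ∈ ℝ₊ⁿ` with `x ≤ y` coordinatewise, `x ∈ K`. -/
def IsAntiBlocking (n : ℕ) (K : Set (EuclideanSpace ℝ (Fin n))) : Prop :=
  IsCompact K ∧ Convex ℝ K ∧ (0 : EuclideanSpace ℝ (Fin n)) ∈ K ∧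
    (∀ y ∈ K, ∀ i, (0:ℝ) ≤ y i) ∧
    ∀ y ∈ K, ∀ x : EuclideanSpace ℝ (Fin n),
      (∀ i, 0 ≤ x i) → (∀ i, x i ≤ y i) → x ∈ K

/-- Sign vector: each entry is `1` or `-1`. -/
def IsSignVector {n : ℕ} (σ : Fin n → ℝ) : Prop := ∀ i, σ i = 1 ∨ σ i = -1

/-- The closed orthant `σℝ₊ⁿ = {x : σ i * x i ≥ 0 for all i}`. -/
def orthant {n : ℕ} (σ : Fin n → ℝ) : Set (EuclideanSpace ℝ (Fin n)) :=
  {x | ∀ i, 0 ≤ σ i * x i}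

/-- Coordinatewise multiplication by the sign vector `σ`. -/
def sgnMul {n : ℕ} (σ : Fin n → ℝ) (x : EuclideanSpace ℝ (Fin n)) :
    EuclideanSpace ℝ (Fin n) :=
  WithLp.toLp 2 (fun i => σ i * x i)

/-- `K` is locally anti-blocking if `σ (K ∩ σℝ₊ⁿ)` is anti-blocking for every sign
vector `σ ∈ {-1,1}ⁿ`. -/
def IsLocallyAntiBlocking (n : ℕ) (K : Set (EuclideanSpace ℝ (Fin n))) : Prop :=
  ∀ σ : Fin n → ℝ, IsSignVector σ →
    IsAntiBlocking n (sgnMul σ '' (K ∩ orthant σ))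

/-- The polar body `K° = {y : ⟪x, y⟫ ≤ 1 for all x ∈ K}`. -/
def polarSet {n : ℕ} (K : Set (EuclideanSpace ℝ (Fin n))) :
    Set (EuclideanSpace ℝ (Fin n)) :=
  {y | ∀ x ∈ K, ⟪x, y⟫ ≤ 1}

/-- The anti-blocking dual `AL = {y ∈ ℝ₊ⁿ : ⟪y, x⟫ ≤ 1 for all x ∈ L}`. -/
def abDual {n : ℕ} (L : Set (EuclideanSpace ℝ (Fin n))) :
    Set (EuclideanSpace ℝ (Fin n)) :=
  {y | (∀ i, (0:ℝ) ≤ y i) ∧ ∀ x ∈ L, ⟪y, x⟫ ≤ 1}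
section

variable {n : ℕ} {σ : Fin n → ℝ} {K L : Set (EuclideanSpace ℝ (Fin n))}

theorem inner_eq_sum_mul (x y : EuclideanSpace ℝ (Fin n)) : ⟪x, y⟫ = ∑ i, x i * y i := by
  simp [PiLp.inner_apply, mul_comm]

theorem inner_le_inner_of_forall_le {x y w : EuclideanSpace ℝ (Fin n)} (hw : ∀ i, 0 ≤ w i)
    (hxy : ∀ i, x i ≤ y i) : ⟪x, w⟫ ≤ ⟪y, w⟫ := by
  rw [inner_eq_sum_mul, inner_eq_sum_mul]
  exact Finset.sum_le_sum fun i _ => mul_le_mul_of_nonneg_right (hxy i) (hw i)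

@[simp]
theorem sgnMul_apply (σ : Fin n → ℝ) (x : EuclideanSpace ℝ (Fin n)) (i : Fin n) :
    sgnMul σ x i = σ i * x i :=
  rfl

theorem IsSignVector.mul_self (hσ : IsSignVector σ) (i : Fin n) : σ i * σ i = 1 := by
  rcases hσ i with h | h <;> simp [h]

theorem sgnMul_involutive (hσ : IsSignVector σ) : Function.Involutive (sgnMul σ) := fun x =>
  PiLp.ext fun i => by rw [sgnMul_apply, sgnMul_apply, ← mul_assoc, hσ.mul_self, one_mul]

theorem image_sgnMul_image_sgnMul (hσ : IsSignVector σ) (S : Set (EuclideanSpace ℝ (Fin n))) :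
    sgnMul σ '' (sgnMul σ '' S) = S := by
  simp only [image_image, sgnMul_involutive hσ _, image_id']

theorem inner_sgnMul_left (σ : Fin n → ℝ) (x y : EuclideanSpace ℝ (Fin n)) :
    ⟪sgnMul σ x, y⟫ = ⟪x, sgnMul σ y⟫ := by
  simp only [inner_eq_sum_mul, sgnMul_apply, mul_assoc, mul_left_comm]

theorem inner_sgnMul_sgnMul (hσ : IsSignVector σ) (x y : EuclideanSpace ℝ (Fin n)) :
    ⟪sgnMul σ x, sgnMul σ y⟫ = ⟪x, y⟫ := by
  rw [inner_sgnMul_left, sgnMul_involutive hσ]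

theorem continuous_sgnMul (σ : Fin n → ℝ) : Continuous (sgnMul σ) := by
  unfold sgnMul; fun_prop

theorem isClosed_orthant (σ : Fin n → ℝ) : IsClosed (orthant σ) := by
  simp only [orthant, Set.ofPred_forall]
  exact isClosed_iInter fun i => isClosed_le continuous_const (by fun_prop)

theorem isClosed_polarSet (K : Set (EuclideanSpace ℝ (Fin n))) : IsClosed (polarSet K) := by
  simp only [polarSet, Set.ofPred_forall]
  exact isClosed_iInter fun x => isClosed_iInter fun _ =>
    isClosed_le (by fun_prop) continuous_const

theorem polarSet_subset_closedBall {r : ℝ} (hr : 0 < r) (hK : Metric.closedBall 0 r ⊆ K) :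
    polarSet K ⊆ Metric.closedBall 0 r⁻¹ := by
  intro y hy
  rcases eq_or_ne y 0 with rfl | hy0
  · simpa using hr.le
  have hny : 0 < ‖y‖ := norm_pos_iff.2 hy0
  have hxK : (r / ‖y‖) • y ∈ K := hK <| by
    rw [mem_closedBall_zero_iff, norm_smul, Real.norm_of_nonneg (by positivity),
      div_mul_cancel₀ r hny.ne']
  rw [mem_closedBall_zero_iff, ← one_div, le_div_iff₀ hr]
  calc ‖y‖ * r = ⟪(r / ‖y‖) • y, y⟫ := by
        rw [real_inner_smul_left, real_inner_self_eq_norm_sq]; field_simp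
    _ ≤ 1 := hy _ hxK

theorem isCompact_polarSet (h0 : (0 : EuclideanSpace ℝ (Fin n)) ∈ interior K) :
    IsCompact (polarSet K) := by
  obtain ⟨r, hr, hball⟩ := Metric.nhds_basis_closedBall.mem_iff.1 (mem_interior_iff_mem_nhds.1 h0)
  exact Metric.isCompact_of_isClosed_isBounded (isClosed_polarSet K)
    (Metric.isBounded_closedBall.subset (polarSet_subset_closedBall hr hball))

theorem IsLocallyAntiBlocking.mem_of_forall_mem_uIcc (hK : IsLocallyAntiBlocking n K)
    {x x' : EuclideanSpace ℝ (Fin n)} (hx : x ∈ K) (hx' : ∀ i, x' i ∈ uIcc 0 (x i)) : x' ∈ K := by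
  set τ : Fin n → ℝ := fun i => if 0 ≤ x i then 1 else -1
  have hτ : IsSignVector τ := fun i => by by_cases h : 0 ≤ x i <;> simp [τ, h]
  have hxτ : ∀ i, 0 ≤ τ i * x' i ∧ τ i * x' i ≤ τ i * x i ∧ 0 ≤ τ i * x i := fun i => by
    have := hx' i
    by_cases h : 0 ≤ x i
    · simp only [τ, h, if_true, uIcc_of_le h, mem_Icc] at this ⊢
      refine ⟨?_, ?_, ?_⟩ <;> linarith
    · simp only [τ, h, if_false, uIcc_of_ge (le_of_not_ge h), mem_Icc] at this ⊢
      refine ⟨?_, ?_, ?_⟩ <;> linarith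
  obtain ⟨u, ⟨huK, -⟩, hu⟩ := (hK τ hτ).2.2.2.2 (sgnMul τ x) ⟨x, ⟨hx, fun i => (hxτ i).2.2⟩, rfl⟩
    (sgnMul τ x') (fun i => (hxτ i).1) (fun i => (hxτ i).2.1)
  rwa [(sgnMul_involutive hτ).injective hu] at huK

theorem IsLocallyAntiBlocking.mem_polarSet_iff (hK : IsLocallyAntiBlocking n K)
    (hσ : IsSignVector σ) {y : EuclideanSpace ℝ (Fin n)} (hy : y ∈ orthant σ) :
    y ∈ polarSet K ↔ y ∈ polarSet (K ∩ orthant σ) := by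
  refine ⟨fun h x hx => h x hx.1, fun h x hx => ?_⟩
  set x' : EuclideanSpace ℝ (Fin n) :=
    WithLp.toLp 2 fun i => if 0 ≤ σ i * x i then x i else 0
  have hx'K : x' ∈ K := hK.mem_of_forall_mem_uIcc hx fun i => by
    by_cases h : 0 ≤ σ i * x i <;> simp [x', h]
  have hx'σ : x' ∈ orthant σ := fun i => by
    by_cases h : 0 ≤ σ i * x i <;> simp [x', h]
  have hxx' : ∀ i, sgnMul σ x i ≤ sgnMul σ x' i := fun i => by
    by_cases h : 0 ≤ σ i * x i <;> simp [x', h]; linarith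
  calc ⟪x, y⟫ = ⟪sgnMul σ x, sgnMul σ y⟫ := (inner_sgnMul_sgnMul hσ x y).symm
    _ ≤ ⟪sgnMul σ x', sgnMul σ y⟫ := inner_le_inner_of_forall_le hy hxx'
    _ = ⟪x', y⟫ := inner_sgnMul_sgnMul hσ x' y
    _ ≤ 1 := h x' ⟨hx'K, hx'σ⟩

theorem sgnMul_mem_abDual_iff (hσ : IsSignVector σ) {y : EuclideanSpace ℝ (Fin n)} :
    sgnMul σ y ∈ abDual (sgnMul σ '' L) ↔ y ∈ orthant σ ∧ y ∈ polarSet L := by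
  refine and_congr Iff.rfl ?_
  rw [forall_mem_image]
  exact forall₂_congr fun x _ => by rw [inner_sgnMul_sgnMul hσ, real_inner_comm]

theorem IsLocallyAntiBlocking.polarSet_inter_orthant (hK : IsLocallyAntiBlocking n K)
    (hσ : IsSignVector σ) :
    polarSet K ∩ orthant σ = sgnMul σ '' abDual (sgnMul σ '' (K ∩ orthant σ)) := by
  ext y
  rw [mem_image_iff_of_inverse (sgnMul_involutive hσ).leftInverse
    (sgnMul_involutive hσ).rightInverse, sgnMul_mem_abDual_iff hσ, mem_inter_iff, and_comm]
  exact and_congr_right (hK.mem_polarSet_iff hσ)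

theorem isAntiBlocking_abDual (hL : ∀ w ∈ L, ∀ i, 0 ≤ w i) (hc : IsCompact (abDual L)) :
    IsAntiBlocking n (abDual L) := by
  refine ⟨hc, ?_, ⟨fun i => le_rfl, fun x _ => by simp⟩, fun y hy => hy.1, ?_⟩
  · rintro y₁ ⟨hy₁, h₁⟩ y₂ ⟨hy₂, h₂⟩ a b ha hb hab
    refine ⟨fun i => ?_, fun x hx => ?_⟩
    · simpa using add_nonneg (mul_nonneg ha (hy₁ i)) (mul_nonneg hb (hy₂ i))
    · calc ⟪a • y₁ + b • y₂, x⟫ = a * ⟪y₁, x⟫ + b * ⟪y₂, x⟫ := by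
            rw [inner_add_left, real_inner_smul_left, real_inner_smul_left]
        _ ≤ a * 1 + b * 1 := by gcongr <;> [exact h₁ x hx; exact h₂ x hx]
        _ = 1 := by rw [mul_one, mul_one, hab]
  · exact fun y hy x hx hxy =>
      ⟨hx, fun w hw => (inner_le_inner_of_forall_le (hL w hw) hxy).trans (hy.2 w hw)⟩

end

theorem polar_locallyAntiBlocking {n : ℕ}
    {K : Set (EuclideanSpace ℝ (Fin n))}
    (hK : IsLocallyAntiBlocking n K)
    (h0 : (0 : EuclideanSpace ℝ (Fin n)) ∈ interior K) :
    IsLocallyAntiBlocking n (polarSet K) ∧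
      ∀ σ : Fin n → ℝ, IsSignVector σ →
        polarSet K ∩ orthant σ =
          sgnMul σ '' abDual (sgnMul σ '' (K ∩ orthant σ)) := by
  refine ⟨fun σ hσ => ?_, fun σ hσ => hK.polarSet_inter_orthant hσ⟩
  have hdual : sgnMul σ '' (polarSet K ∩ orthant σ) = abDual (sgnMul σ '' (K ∩ orthant σ)) := by
    rw [hK.polarSet_inter_orthant hσ, image_sgnMul_image_sgnMul hσ]
  rw [hdual]
  refine isAntiBlocking_abDual (hK σ hσ).2.2.2.1 ?_
  rw [← hdual]
  exact ((isCompact_polarSet h0).inter_right (isClosed_orthant σ)).image (continuous_sgnMul σ)
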